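/- arXiv:2210.00901 — 2 statements merged into one kernel-verified Lean document; each statement's English description precedes it below -/
import Mathlib

section
/- Let c : ℕ → ℕ be computable with unbounded range. Then for every k : ℕ there exist y : ℕ and a code e outputting y such that length(e) + k ≤ c(y); in particular C(y) + k ≤ c(y). (This is Lemma 2.1 of the paper: for an infinite computably enumerable assembly space with computable assembly index c, there is an object y and a program p_y producing y with K(y) + k ≤ |p_y| + k + O(1) ≤ c(y).) -/
/-- The length of a program (code): number of binary digits of its encoding. -/
def codeLen (e : Nat.Partrec.Code) : ℕ := Nat.size (Encodable.encode e)

/-- A code `e` outputs `y` if evaluating it on input `0` yields `y`. -/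
def Outputs (e : Nat.Partrec.Code) (y : ℕ) : Prop := e.eval 0 = Part.some y

/-- Kolmogorov complexity of `y`: the least length of a code outputting `y`. -/
noncomputable def C (y : ℕ) : ℕ := sInf { n | ∃ e : Nat.Partrec.Code, Outputs e y ∧ codeLen e = n }

/-!
By Kleene's recursion theorem there is a program `e` that knows its own code and searches for
the first `y` with `encode e + k ≤ c y`; the search halts because `c` is unbounded, and its
output `y` then satisfies `codeLen e + k ≤ encode e + k ≤ c y`.
-/

open Nat.Partrec

theorem codeLen_le_encode (e : Code) : codeLen e ≤ Encodable.encode e :=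
  Nat.size_le.2 Nat.lt_two_pow_self

theorem C_le_codeLen {e : Code} {y : ℕ} (h : Outputs e y) : C y ≤ codeLen e :=
  Nat.sInf_le ⟨e, h, rfl⟩

def searchAbove (c : ℕ → ℕ) (n : ℕ) : Part ℕ :=
  Nat.rfind fun x => Part.some (decide (n ≤ c x))

theorem Computable.partrec_searchAbove {c : ℕ → ℕ} (hc : Computable c) :
    Partrec (searchAbove c) :=
  Partrec.rfind <| Computable₂.partrec₂ <|
    Primrec.nat_le.decide.to_comp.comp Computable.fst (hc.comp Computable.snd)

theorem exists_mem_searchAbove {c : ℕ → ℕ} {n : ℕ} (h : ∃ x, n ≤ c x) :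
    ∃ y ∈ searchAbove c n, n ≤ c y := by
  obtain ⟨x, hx⟩ := h
  have hdom : (searchAbove c n).Dom := Nat.rfind_dom.2 ⟨x, by simpa using hx, fun _ => trivial⟩
  obtain ⟨y, hy⟩ := Part.dom_iff_mem.1 hdom
  exact ⟨y, hy, by simpa using Nat.rfind_spec hy⟩

theorem exists_outputs_le_of_unbounded {c : ℕ → ℕ} (hc : Computable c)
    (hub : ∀ N, ∃ x, N ≤ c x) {b : Code → ℕ} (hb : Computable b) :
    ∃ (e : Code) (y : ℕ), Outputs e y ∧ b e ≤ c y := by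
  have hsearch : Partrec₂ fun (e : Code) (_ : ℕ) => searchAbove c (b e) :=
    hc.partrec_searchAbove.comp (hb.comp Computable.fst)
  obtain ⟨e, he⟩ := Code.fixed_point₂ hsearch
  obtain ⟨y, hy, hby⟩ := exists_mem_searchAbove (hub (b e))
  exact ⟨e, y, by rw [Outputs, he]; exact Part.eq_some_iff.2 hy, hby⟩

/-- Lemma 2.1: for a computable assembly index `c` with unbounded range, for every `k`
there are an object `y` and a program `e` producing `y` with
`length(e) + k ≤ c y`, hence `C y + k ≤ c y`. -/
theorem deceiving_object_high_assembly_index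
    (c : ℕ → ℕ) (hc : Computable c) (hub : ∀ N : ℕ, ∃ x : ℕ, N ≤ c x) (k : ℕ) :
    ∃ (y : ℕ) (e : Nat.Partrec.Code), Outputs e y ∧
      codeLen e + k ≤ c y ∧ C y + k ≤ c y := by
  have hb : Computable fun e : Code => Encodable.encode e + k :=
    (Primrec.nat_add.comp Primrec.encode (Primrec.const k)).to_comp
  obtain ⟨e, y, hout, hy⟩ := exists_outputs_le_of_unbounded hc hub hb
  have hlen : codeLen e + k ≤ c y := (Nat.add_le_add_right (codeLen_le_encode e) k).trans hy
  exact ⟨y, e, hout, hlen, (Nat.add_le_add_right (C_le_codeLen hout) k).trans hlen⟩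
end

section
/- Let c : ℕ → ℕ be computable with unbounded range, and let P : ℕ → ℚ be a computable pathway-probability bound that is jointly small along high-index objects. Then for all E, m : ℕ there exist y : ℕ and a code e outputting y such that length(e) + E < c(y) and (P(y) : ℝ) < 2^(-(length(e) + m)); that is, the algorithmic-probability lower bound 2^(-length(e)) for randomly generating a program that constructs y exceeds the computed pathway probability P(y) by a factor of at least 2^m, while the assembly index of y exceeds the deceiver program's length by more than E. (This is Lemma 2.3 of the paper: a deceiver program p_d with |p_d| + E < c(y) whose algorithmic probability 2^(-|p_d|) diverges from the pathway probability of spontaneous formation by any desired statistically significant factor.) -/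
/-!
With `T k = 2 ^ (2 * k)`, joint smallness makes the search for the first `y` with
`T k ≤ c y` and `P y < 2 ^ (-T k)` halt for every `k`, and the search is computable because
`c` and `P` are. If `e₀` is a code for the search, then `e₀ ∘ const k` outputs such a `y`. Its
length is at most `2 |e₀| + 2 ^ (k + 3)`: `Code.const k` is `k` nested compositions with `succ`,
and composing codes of length at most `ℓ` gives a code of length at most `2ℓ + 3`. For large `k`
this is below `T k - E - m`, which gives both inequalities.

Mathlib's `Primcodable ℚ` numbers a rational by the rank of its `Encodable` code among all such
codes, so deciding `q < 2 ^ (-n)` from that number requires recovering the code by an unbounded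
search.
-/

open Encodable Denumerable
open Nat.Partrec (Code)

theorem Primrec.nat_pow : Primrec₂ ((· ^ ·) : ℕ → ℕ → ℕ) :=
  Primrec₂.unpaired'.1 Nat.Primrec.pow

namespace Int

theorem natAbs_eq_encode_add_one_div_two (z : ℤ) : z.natAbs = (encode z + 1) / 2 := by
  cases z with
  | ofNat n => show n = (2 * n + 1) / 2; omega
  | negSucc n => show n + 1 = (2 * n + 1 + 1) / 2; omega

theorem lt_zero_iff_encode_mod_two_eq_one (z : ℤ) : z < 0 ↔ encode z % 2 = 1 := by
  cases z with
  | ofNat n => exact iff_of_false (not_lt.2 (natCast_nonneg n)) (show ¬(2 * n) % 2 = 1 by omega)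
  | negSucc n => exact iff_of_true (negSucc_lt_zero n) (show (2 * n + 1) % 2 = 1 by omega)

end Int

theorem Primrec.int_natAbs : Primrec Int.natAbs :=
  (Primrec.nat_div.comp (Primrec.succ.comp .encode) (.const 2)).of_eq
    fun z => (Int.natAbs_eq_encode_add_one_div_two z).symm

theorem Primrec.int_lt_zero : PrimrecPred fun z : ℤ => z < 0 :=
  (PrimrecRel.comp Primrec.eq (Primrec.nat_mod.comp .encode (.const 2)) (.const 1)).of_eq
    fun z => (Int.lt_zero_iff_encode_mod_two_eq_one z).symm

theorem Nat.coprime_iff_forall_lt_dvd (a b : ℕ) :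
    a.Coprime b ↔ ∀ d < a + b + 1, d ∣ a → d ∣ b → d = 1 := by
  refine ⟨fun h d _ hda hdb => Nat.eq_one_of_dvd_one (h ▸ Nat.dvd_gcd hda hdb),
    fun h => h _ ?_ (Nat.gcd_dvd_left a b) (Nat.gcd_dvd_right a b)⟩
  rcases Nat.eq_zero_or_pos a with rfl | ha
  · simp
  · have := Nat.gcd_le_left b ha
    omega

theorem Primrec.nat_coprime : PrimrecRel Nat.Coprime := by
  have hdvd : PrimrecRel fun (d : ℕ) (ab : ℕ × ℕ) =>
      d ∣ ab.1 → d ∣ ab.2 → d = 1 := by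
    have hdvd_of (f : ℕ × ℕ → ℕ) (hf : Primrec f) :
        PrimrecRel fun (d : ℕ) (ab : ℕ × ℕ) => d ∣ f ab :=
      (PrimrecRel.comp Primrec.eq (Primrec.nat_mod.comp (hf.comp .snd) .fst) (.const 0)).of_eq
        fun _ => Nat.dvd_iff_mod_eq_zero.symm
    refine (((hdvd_of _ Primrec.fst).not.or (hdvd_of _ Primrec.snd).not).or
      (PrimrecRel.comp Primrec.eq .fst (.const 1))).of_eq fun _ => ?_
    tauto
  refine ((PrimrecRel.forall_mem_list hdvd).comp₂
    (Primrec.list_range.comp₂ (Primrec.succ.comp₂ Primrec.nat_add))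
    Primrec₂.pair).of_eq fun a b => ?_
  simp only [List.mem_range, Nat.coprime_iff_forall_lt_dvd]

namespace Rat

/-- The code of `q` under `Rat.instEncodable`, which is what `encode q` elaborates to; it is not
the encoding of the `Primcodable ℚ` instance. -/
def rawCode (q : ℚ) : ℕ := Nat.pair (encode q.num) q.den

def IsRawCode (r : ℕ) : Prop :=
  0 < r.unpair.2 ∧ (ofNat ℤ r.unpair.1).natAbs.Coprime r.unpair.2

instance : DecidablePred IsRawCode := fun _ => instDecidableAnd

theorem isRawCode_iff_mem_range (r : ℕ) : IsRawCode r ↔ r ∈ Set.range rawCode := by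
  constructor
  · rintro ⟨hpos, hcop⟩
    refine ⟨⟨ofNat ℤ r.unpair.1, r.unpair.2, hpos.ne', hcop⟩, ?_⟩
    simp only [rawCode, Denumerable.encode_ofNat, Nat.pair_unpair]
  · rintro ⟨q, rfl⟩
    simp only [IsRawCode, rawCode, Nat.unpair_pair, Denumerable.ofNat_encode]
    exact ⟨q.pos, q.reduced⟩

theorem primrecPred_isRawCode : PrimrecPred IsRawCode :=
  (PrimrecRel.comp Primrec.nat_lt (.const 0) (Primrec.snd.comp .unpair)).and
    (PrimrecRel.comp Primrec.nat_coprime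
      (Primrec.int_natAbs.comp ((Primrec.ofNat ℤ).comp (Primrec.fst.comp .unpair)))
      (Primrec.snd.comp .unpair))

def rawCodeRank (r : ℕ) : ℕ := (List.range r).countP fun s => decide (IsRawCode s)

theorem primrec_rawCodeRank : Primrec rawCodeRank :=
  (Primrec.list_length.comp ((Primrec.listFilter primrecPred_isRawCode).comp .list_range)).of_eq
    fun _ => (List.countP_eq_length_filter ..).symm

theorem rawCodeRank_rawCode_ofNat (n : ℕ) : rawCodeRank (rawCode (ofNat ℚ n)) = n :=
  calc rawCodeRank (rawCode (ofNat ℚ n))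
      = (List.range (rawCode (ofNat ℚ n))).countP
          fun s => @decide (s ∈ Set.range rawCode) (decidableRangeEncode ℚ s) := by
        unfold rawCodeRank
        congr 1
        funext s
        exact decide_eq_decide.2 (isRawCode_iff_mem_range s)
    -- `Denumerable.ofEncodableOfInfinite` ranks a code by counting the smaller codes
    _ = eqv ℚ (ofNat ℚ n) := rfl
    _ = n := (eqv ℚ).apply_symm_apply n

theorem rawCode_ofNat_eq_of_rawCodeRank_eq {r n : ℕ} (hr : IsRawCode r)
    (hn : rawCodeRank r = n) : rawCode (ofNat ℚ n) = r := by
  obtain ⟨q, rfl⟩ := (isRawCode_iff_mem_range r).1 hr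
  obtain ⟨k, rfl⟩ : ∃ k, ofNat ℚ k = q := ⟨_, ofNat_encode q⟩
  rw [← hn, rawCodeRank_rawCode_ofNat]

theorem computable_rawCode : Computable rawCode := by
  have htest : Computable₂ fun n r => decide (IsRawCode r ∧ rawCodeRank r = n) :=
    ((primrecPred_isRawCode.comp Primrec.snd).and
      (PrimrecRel.comp Primrec.eq (primrec_rawCodeRank.comp .snd) .fst)).decide.to_comp
  have hmem (n : ℕ) : rawCode (ofNat ℚ n) ∈
      Nat.rfind fun r => Part.some (decide (IsRawCode r ∧ rawCodeRank r = n)) := by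
    refine Nat.mem_rfind.2 ⟨?_, fun {m} hm => ?_⟩
    · simpa [isRawCode_iff_mem_range] using rawCodeRank_rawCode_ofNat n
    · simp only [Part.mem_some_iff, eq_comm (a := false), decide_eq_false_iff_not]
      exact fun ⟨hr, hrank⟩ => hm.ne' (rawCode_ofNat_eq_of_rawCodeRank_eq hr hrank)
  exact (((Partrec.rfind htest.partrec₂).of_eq_tot hmem).comp Computable.encode).of_eq
    fun q => by rw [ofNat_encode]

theorem computable_num : Computable Rat.num :=
  ((Primrec.ofNat ℤ).to_comp.comp (Computable.fst.comp (Primrec.unpair.to_comp.comp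
    computable_rawCode))).of_eq fun q => by simp only [rawCode, Nat.unpair_pair, ofNat_encode]

theorem computable_den : Computable Rat.den :=
  (Computable.snd.comp (Primrec.unpair.to_comp.comp computable_rawCode)).of_eq
    fun q => by simp only [rawCode, Nat.unpair_pair]

theorem lt_inv_two_pow_iff (q : ℚ) (n : ℕ) :
    q < (2 ^ n)⁻¹ ↔ q.num < 0 ∨ q.num.natAbs * 2 ^ n < q.den := by
  have hcross : q < (2 ^ n)⁻¹ ↔ q.num * 2 ^ n < q.den := by
    conv_lhs => rw [← Rat.num_div_den q]
    rw [← one_div, div_lt_div_iff₀ (by exact_mod_cast q.pos) (by positivity), one_mul]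
    exact_mod_cast Iff.rfl
  rw [hcross]
  rcases lt_or_ge q.num 0 with hneg | hnonneg
  · have : q.num * 2 ^ n < 0 := mul_neg_of_neg_of_pos hneg (by positivity)
    simp only [hneg, true_or, iff_true]
    omega
  · simp only [not_lt.2 hnonneg, false_or]
    rw [← Int.natAbs_of_nonneg hnonneg]
    exact_mod_cast Iff.rfl

theorem computable_lt_inv_two_pow :
    Computable₂ fun (q : ℚ) (n : ℕ) => decide (q < (2 ^ n)⁻¹) := by
  have hnum : Computable fun p : ℚ × ℕ => p.1.num := computable_num.comp .fst
  have hden : Computable fun p : ℚ × ℕ => p.1.den := computable_den.comp .fst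
  have hpow : Computable fun p : ℚ × ℕ => 2 ^ p.2 :=
    Primrec.nat_pow.to_comp.comp (.const 2) .snd
  have hlhs : Computable fun p : ℚ × ℕ => p.1.num.natAbs * 2 ^ p.2 :=
    Primrec.nat_mul.to_comp.comp (Primrec.int_natAbs.to_comp.comp hnum) hpow
  refine (Primrec.or.to_comp.comp (Primrec.int_lt_zero.decide.to_comp.comp hnum)
    ((PrimrecRel.decide Primrec.nat_lt).to_comp.comp hlhs hden)).of_eq fun p => ?_
  simp only [lt_inv_two_pow_iff, Bool.decide_or]

end Rat

namespace Nat.Partrec.Code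

theorem encode_comp (a b : Code) :
    encode (a.comp b) = 4 * Nat.pair (encode a) (encode b) + 6 := by
  simp only [encodeCode_eq, encodeCode]
  omega

theorem codeLen_comp_le (a b : Code) :
    codeLen (a.comp b) ≤ 2 * max (codeLen a) (codeLen b) + 3 := by
  set M := max (codeLen a) (codeLen b)
  have hmax : max (encode a) (encode b) + 1 ≤ 2 ^ M := by
    have ha : encode a < 2 ^ M := Nat.size_le.1 (le_max_left _ _)
    have hb : encode b < 2 ^ M := Nat.size_le.1 (le_max_right _ _)
    omega
  have hpair := (Nat.pair_lt_max_add_one_sq (encode a) (encode b)).trans_le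
    (Nat.pow_le_pow_left hmax 2)
  have hpos : 0 < (2 ^ M) ^ 2 := by positivity
  rw [codeLen, Nat.size_le, encode_comp, show 2 ^ (2 * M + 3) = 8 * (2 ^ M) ^ 2 by ring]
  omega

theorem codeLen_const_add_three_le (k : ℕ) : codeLen (Code.const k) + 3 ≤ 2 ^ (k + 2) := by
  induction k with
  | zero => decide
  | succ k ih =>
    have hsucc : codeLen Code.succ = 1 := rfl
    have hcomp := codeLen_comp_le Code.succ (Code.const k)
    have h4 : 4 ≤ 2 ^ (k + 2) := by
      simpa using Nat.pow_le_pow_right two_pos (Nat.le_add_left 2 k)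
    rw [hsucc] at hcomp
    rw [pow_succ]
    show codeLen (Code.succ.comp (Code.const k)) + 3 ≤ _
    omega

theorem codeLen_comp_const_le (e : Code) (k : ℕ) :
    codeLen (e.comp (Code.const k)) ≤ 2 * codeLen e + 2 ^ (k + 3) := by
  have := codeLen_comp_le e (Code.const k)
  have := codeLen_const_add_three_le k
  rw [pow_succ]
  omega

theorem eval_comp_const (e : Code) (k n : ℕ) : (e.comp (Code.const k)).eval n = e.eval k := by
  simp only [eval, eval_const]
  exact Part.bind_some k e.eval

end Nat.Partrec.Code

theorem exists_code_forall_eval_eq_some {p : ℕ → ℕ → Prop} [∀ k, DecidablePred (p k)]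
    (hp : Computable₂ fun k y => decide (p k y)) (h : ∀ k, ∃ y, p k y) :
    ∃ e : Code, ∀ k, ∃ y, p k y ∧ e.eval k = Part.some y := by
  obtain ⟨e, he⟩ := Code.exists_code.1 (Partrec.nat_iff.1 (Partrec.rfind hp.partrec₂))
  refine ⟨e, fun k => ?_⟩
  obtain ⟨y₀, hy₀⟩ := h k
  obtain ⟨y, hy⟩ := Part.dom_iff_mem.1
    ((Nat.rfind_dom (p := fun y => Part.some (decide (p k y)))).2
      ⟨y₀, by simpa using hy₀, fun _ => trivial⟩)
  refine ⟨y, ?_, by rw [he]; exact Part.eq_some_iff.2 hy⟩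
  simpa using Nat.rfind_spec hy

theorem exists_add_two_pow_lt_two_pow_two_mul (A : ℕ) :
    ∃ k, A + 2 ^ (k + 3) < 2 ^ (2 * k) := by
  refine ⟨A + 9, ?_⟩
  have h : A + 9 < 2 ^ (A + 9) := Nat.lt_two_pow_self
  rw [pow_add 2 (A + 9) 3, two_mul, pow_add 2 (A + 9) (A + 9)]
  nlinarith

theorem deceiver_program_diverging_probabilities_general
    (c : ℕ → ℕ) (hc : Computable c)
    (P : ℕ → ℚ) (hP : Computable P)
    (hsmall : ∀ N : ℕ, ∀ ε : ℚ, 0 < ε → ∃ x : ℕ, N ≤ c x ∧ P x < ε)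
    (E m : ℕ) :
    ∃ (y : ℕ) (e : Nat.Partrec.Code), Outputs e y ∧
      codeLen e + E < c y ∧ (P y : ℝ) < (2 : ℝ) ^ (-((codeLen e + m : ℕ) : ℤ)) := by
  let T : ℕ → ℕ := fun k => 2 ^ (2 * k)
  have hT : Computable T := Primrec.nat_pow.to_comp.comp (.const 2) Primrec.nat_double.to_comp
  have hsearch : Computable₂ fun k y => decide (T k ≤ c y ∧ P y < (2 ^ T k)⁻¹) :=
    (Primrec.and.to_comp.comp
      ((PrimrecRel.decide Primrec.nat_le).to_comp.comp (hT.comp .fst) (hc.comp .snd))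
      (Rat.computable_lt_inv_two_pow.comp (hP.comp .snd) (hT.comp .fst))).of_eq
      fun _ => (Bool.decide_and ..).symm
  obtain ⟨e₀, he₀⟩ := exists_code_forall_eval_eq_some hsearch
    fun k => hsmall (T k) _ (by positivity)
  obtain ⟨k, hk⟩ : ∃ k, 2 * codeLen e₀ + E + m + 2 ^ (k + 3) < T k :=
    exists_add_two_pow_lt_two_pow_two_mul _
  obtain ⟨y, ⟨hcy, hPy⟩, hy⟩ := he₀ k
  have hlen := Code.codeLen_comp_const_le e₀ k
  refine ⟨y, e₀.comp (Code.const k), by rw [Outputs, Code.eval_comp_const, hy], by omega, ?_⟩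
  calc (P y : ℝ) < ((2 ^ T k)⁻¹ : ℚ) := by exact_mod_cast hPy
    _ = 2 ^ (-(T k : ℤ)) := by push_cast; rw [zpow_neg, zpow_natCast]
    _ ≤ _ := zpow_le_zpow_right₀ one_le_two (by omega)

/-- Lemma 2.3: for a computable assembly index `c` with unbounded range and a computable
pathway-probability bound `P` that is jointly small along high-index objects, for all `E, m`
there are an object `y` and a deceiver program `e` producing `y` with `length(e) + E < c y`
and `P y < 2^(-(length(e) + m))`: the algorithmic-probability lower bound `2^(-length(e))`
exceeds the pathway probability `P y` by a factor of at least `2^m`. -/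
theorem deceiver_program_diverging_probabilities
    (c : ℕ → ℕ) (hc : Computable c) (hub : ∀ N : ℕ, ∃ x : ℕ, N ≤ c x)
    (P : ℕ → ℚ) (hP : Computable P) (hP01 : ∀ y : ℕ, 0 ≤ P y ∧ P y ≤ 1)
    (hsmall : ∀ N : ℕ, ∀ ε : ℚ, 0 < ε → ∃ x : ℕ, N ≤ c x ∧ P x < ε)
    (E m : ℕ) :
    ∃ (y : ℕ) (e : Nat.Partrec.Code), Outputs e y ∧
      codeLen e + E < c y ∧ (P y : ℝ) < (2 : ℝ) ^ (-((codeLen e + m : ℕ) : ℤ)) :=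
  deceiver_program_diverging_probabilities_general c hc P hP hsmall E m
end
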